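/- Let L : ℝⁿ × ℝⁿ × ℝ → ℝ be a smooth regular Lagrangian, i.e., with everywhere invertible Hessian W = (∂²L/∂vⁱ∂vʲ), and let X_L be the Euler–Lagrange vector field X_L(q, v, z) = (v, F(q, v, z), L(q, v, z)) where Fⁱ = W^{ik}(∂L/∂q^k − (∂²L/∂qʲ∂v^k)vʲ − L·(∂²L/∂z∂v^k) + (∂L/∂z)(∂L/∂v^k)). Then a C² curve t ↦ (q(t), v(t), z(t)) is an integral curve of X_L (i.e., q̇ = v, v̇ = F(q, v, z), ż = L(q, v, z)) if and only if v(t) = q̇(t) for all t and the curve (q(t), z(t)) satisfies the Herglotz equations. -/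

import Mathlib

open scoped BigOperators

noncomputable section

/-- Points of `TQ × ℝ = ℝⁿ × ℝⁿ × ℝ`, coordinates `(q, v, z)`. -/
abbrev LPt (n : ℕ) := (Fin n → ℝ) × (Fin n → ℝ) × ℝ

/-- `∂L/∂qⁱ` at `x`. -/
def pderivQ {n : ℕ} (L : LPt n → ℝ) (x : LPt n) (i : Fin n) : ℝ :=
  fderiv ℝ L x (Pi.single i (1 : ℝ), (0 : Fin n → ℝ), (0 : ℝ))

/-- `∂L/∂vⁱ` at `x`. -/
def pderivV {n : ℕ} (L : LPt n → ℝ) (x : LPt n) (i : Fin n) : ℝ :=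
  fderiv ℝ L x ((0 : Fin n → ℝ), Pi.single i (1 : ℝ), (0 : ℝ))

/-- `∂L/∂z` at `x`. -/
def pderivZ {n : ℕ} (L : LPt n → ℝ) (x : LPt n) : ℝ :=
  fderiv ℝ L x ((0 : Fin n → ℝ), (0 : Fin n → ℝ), (1 : ℝ))

/-- The Hessian matrix `W_{ij} = ∂²L/∂vⁱ∂vʲ` at `x`. -/
def hessianV {n : ℕ} (L : LPt n → ℝ) (x : LPt n) : Matrix (Fin n) (Fin n) ℝ :=
  Matrix.of fun i j =>
    fderiv ℝ (fun y => pderivV L y j) x ((0 : Fin n → ℝ), Pi.single i (1 : ℝ), (0 : ℝ))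

/-- The mixed second partial derivative `∂²L/∂qʲ∂vᵏ` at `x`. -/
def mixedQV {n : ℕ} (L : LPt n → ℝ) (x : LPt n) (j k : Fin n) : ℝ :=
  fderiv ℝ (fun y => pderivV L y k) x (Pi.single j (1 : ℝ), (0 : Fin n → ℝ), (0 : ℝ))

/-- The mixed second partial derivative `∂²L/∂z∂vᵏ` at `x`. -/
def mixedZV {n : ℕ} (L : LPt n → ℝ) (x : LPt n) (k : Fin n) : ℝ :=
  fderiv ℝ (fun y => pderivV L y k) x ((0 : Fin n → ℝ), (0 : Fin n → ℝ), (1 : ℝ))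

/-- The force term of the Euler–Lagrange vector field:
`Fⁱ = W^{ik}(∂L/∂qᵏ − (∂²L/∂qʲ∂vᵏ)vʲ − L·(∂²L/∂z∂vᵏ) + (∂L/∂z)(∂L/∂vᵏ))`. -/
def elForce {n : ℕ} (L : LPt n → ℝ) (x : LPt n) (i : Fin n) : ℝ :=
  ∑ k, (hessianV L x)⁻¹ i k *
    (pderivQ L x k - (∑ j, mixedQV L x j k * x.2.1 j) - L x * mixedZV L x k +
      pderivZ L x * pderivV L x k)

/-- The Herglotz (generalized Euler–Lagrange) equations for a curve `t ↦ (q(t), z(t))`. -/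
def Herglotz {n : ℕ} (L : LPt n → ℝ) (q : ℝ → Fin n → ℝ) (z : ℝ → ℝ) : Prop :=
  ∀ t : ℝ, deriv z t = L (q t, deriv q t, z t) ∧
    ∀ i, deriv (fun s => pderivV L (q s, deriv q s, z s) i) t -
        pderivQ L (q t, deriv q t, z t) i =
      pderivZ L (q t, deriv q t, z t) * pderivV L (q t, deriv q t, z t) i

def eQ {n : ℕ} (i : Fin n) : LPt n := (Pi.single i (1 : ℝ), 0, 0)

def eV {n : ℕ} (i : Fin n) : LPt n := (0, Pi.single i (1 : ℝ), 0)

def eZ {n : ℕ} : LPt n := (0, 0, 1)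

lemma decomp {n : ℕ} (a b : Fin n → ℝ) (m : ℝ) :
    ((a, b, m) : LPt n) = (∑ i, a i • eQ i) + ((∑ i, b i • eV i) + m • eZ) := by
  simp only [eQ, eV, eZ, Prod.smul_mk, Prod.mk_add_mk, Prod.ext_iff,
    Prod.fst_sum, Prod.snd_sum, smul_zero]
  refine ⟨?_, ?_, ?_⟩
  · funext j
    simp [Prod.fst_sum, Finset.sum_apply, Pi.single_apply, mul_comm]
  · funext j
    simp [Prod.fst_sum, Prod.snd_sum, Finset.sum_apply, Pi.single_apply, mul_comm]
  · simp [Prod.fst_sum, Prod.snd_sum]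

lemma clm_decomp {n : ℕ} (φ : LPt n →L[ℝ] ℝ) (a b : Fin n → ℝ) (m : ℝ) :
    φ (a, b, m) = (∑ i, a i * φ (eQ i)) + (∑ i, b i * φ (eV i)) + m * φ eZ := by
  rw [decomp a b m]
  simp [add_assoc]

lemma contDiff_fderivL {n : ℕ} {L : LPt n → ℝ} (hL : ContDiff ℝ (⊤ : ℕ∞) L) :
    ContDiff ℝ (⊤ : ℕ∞) (fderiv ℝ L) :=
  hL.fderiv_right (by exact_mod_cast le_top)

lemma contDiff_pderivV {n : ℕ} {L : LPt n → ℝ} (hL : ContDiff ℝ (⊤ : ℕ∞) L) (i : Fin n) :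
    ContDiff ℝ (⊤ : ℕ∞) (fun x => pderivV L x i) :=
  ((ContinuousLinearMap.apply ℝ ℝ
    (((0 : Fin n → ℝ), Pi.single i (1 : ℝ), (0 : ℝ)) : LPt n)).contDiff).comp
    (contDiff_fderivL hL)

/-- chain rule along a curve for `∂L/∂vᵢ`. -/
lemma hasDerivAt_pderivV_comp {n : ℕ} {L : LPt n → ℝ} (hL : ContDiff ℝ (⊤ : ℕ∞) L) (i : Fin n)
    {c : ℝ → LPt n} {t : ℝ} {a b : Fin n → ℝ} {m : ℝ} (hc : HasDerivAt c (a, b, m) t) :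
    HasDerivAt (fun s => pderivV L (c s) i)
      ((∑ j, a j * mixedQV L (c t) j i) + (∑ j, b j * hessianV L (c t) j i)
        + m * mixedZV L (c t) i) t := by
  have hP : ContDiff ℝ (⊤ : ℕ∞) (fun x => pderivV L x i) := contDiff_pderivV hL i
  have hPd : DifferentiableAt ℝ (fun x => pderivV L x i) (c t) :=
    (hP.differentiable (by simp)).differentiableAt
  have h := (hPd.hasFDerivAt).comp_hasDerivAt t hc
  refine HasDerivAt.congr_deriv h ?_
  rw [clm_decomp]
  rfl

lemma hessianV_symm {n : ℕ} {L : LPt n → ℝ} (hL : ContDiff ℝ (⊤ : ℕ∞) L) (x : LPt n) (i j : Fin n) :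
    hessianV L x i j = hessianV L x j i := by
  have hdiff : Differentiable ℝ L := hL.differentiable (by simp)
  have h1 : ∀ y, HasFDerivAt L (fderiv ℝ L y) y := fun y => (hdiff y).hasFDerivAt
  have h2 : HasFDerivAt (fderiv ℝ L) (fderiv ℝ (fderiv ℝ L) x) x :=
    (((contDiff_fderivL hL).differentiable (by simp)) x).hasFDerivAt
  have hsym := second_derivative_symmetric h1 h2
  have key : ∀ k u, fderiv ℝ (fun y => pderivV L y k) x u
      = fderiv ℝ (fderiv ℝ L) x u (((0 : Fin n → ℝ), Pi.single k (1 : ℝ), (0 : ℝ)) : LPt n) := by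
    intro k u
    have := ((ContinuousLinearMap.apply ℝ ℝ
        (((0 : Fin n → ℝ), Pi.single k (1 : ℝ), (0 : ℝ)) : LPt n)).hasFDerivAt.comp x h2).fderiv
    calc fderiv ℝ (fun y => pderivV L y k) x u = fderiv ℝ
          ((ContinuousLinearMap.apply ℝ ℝ
            (((0 : Fin n → ℝ), Pi.single k (1 : ℝ), (0 : ℝ)) : LPt n)) ∘ fderiv ℝ L) x u := rfl
      _ = fderiv ℝ (fderiv ℝ L) x u (((0 : Fin n → ℝ), Pi.single k (1 : ℝ), (0 : ℝ)) : LPt n) := by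
          rw [this]; rfl
  show fderiv ℝ (fun y => pderivV L y j) x _ = fderiv ℝ (fun y => pderivV L y i) x _
  rw [key, key]
  exact hsym _ _

lemma matrix_key {n : ℕ} (W : Matrix (Fin n) (Fin n) ℝ) (hW : IsUnit W)
    (hsym : ∀ i j, W i j = W j i) (G : Fin n → ℝ) (i : Fin n) :
    ∑ j, (∑ k, W⁻¹ j k * G k) * W j i = G i := by
  have hd : IsUnit W.det := (Matrix.isUnit_iff_isUnit_det W).mp hW
  have h1 : W * W⁻¹ = 1 := Matrix.mul_nonsing_inv W hd
  have h2 : ∀ k, ∑ j, W i j * W⁻¹ j k = (1 : Matrix (Fin n) (Fin n) ℝ) i k := fun k => by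
    rw [← h1, Matrix.mul_apply]
  calc ∑ j, (∑ k, W⁻¹ j k * G k) * W j i
      = ∑ k, ∑ j, (W⁻¹ j k * G k) * W j i := by
        simp_rw [Finset.sum_mul]
        exact Finset.sum_comm
    _ = ∑ k, G k * ∑ j, W i j * W⁻¹ j k := by
        refine Finset.sum_congr rfl fun k _ => ?_
        rw [Finset.mul_sum]
        refine Finset.sum_congr rfl fun j _ => ?_
        rw [hsym i j]; ring
    _ = G i := by simp [h2, Matrix.one_apply]

lemma matrix_key2 {n : ℕ} (W : Matrix (Fin n) (Fin n) ℝ) (hW : IsUnit W)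
    (hsym : ∀ i j, W i j = W j i) (d : Fin n → ℝ) (i : Fin n) :
    ∑ k, W⁻¹ i k * (∑ j, d j * W j k) = d i := by
  have hd : IsUnit W.det := (Matrix.isUnit_iff_isUnit_det W).mp hW
  have h1 : W⁻¹ * W = 1 := Matrix.nonsing_inv_mul W hd
  have h2 : ∀ j, ∑ k, W⁻¹ i k * W k j = (1 : Matrix (Fin n) (Fin n) ℝ) i j := fun j => by
    rw [← h1, Matrix.mul_apply]
  calc ∑ k, W⁻¹ i k * (∑ j, d j * W j k)
      = ∑ j, d j * ∑ k, W⁻¹ i k * W k j := by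
        simp_rw [Finset.mul_sum]
        rw [Finset.sum_comm]
        refine Finset.sum_congr rfl fun j _ => ?_
        refine Finset.sum_congr rfl fun k _ => ?_
        rw [hsym j k]; ring
    _ = d i := by simp [h2, Matrix.one_apply]

/-- A C² curve `t ↦ (q(t), v(t), z(t))` is an integral curve of the Euler–Lagrange
vector field `X_L = (v, F, L)` of a regular Lagrangian iff `v = q̇` and the curve
`(q, z)` satisfies the Herglotz equations. -/
theorem integral_curve_XL_iff_herglotz (n : ℕ) (L : LPt n → ℝ)
    (hL : ContDiff ℝ (⊤ : ℕ∞) L) (hW : ∀ x : LPt n, IsUnit (hessianV L x))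
    (q v : ℝ → Fin n → ℝ) (z : ℝ → ℝ)
    (hcurve : ContDiff ℝ 2 (fun t => ((q t, v t, z t) : LPt n))) :
    (∀ t : ℝ, deriv q t = v t ∧
        deriv v t = (fun i => elForce L (q t, v t, z t) i) ∧
        deriv z t = L (q t, v t, z t)) ↔
      ((∀ t : ℝ, v t = deriv q t) ∧ Herglotz L q z) := by
  have hq : ContDiff ℝ 2 q := contDiff_fst.comp hcurve
  have hv : ContDiff ℝ 2 v := contDiff_fst.comp (contDiff_snd.comp hcurve)
  have hz : ContDiff ℝ 2 z := contDiff_snd.comp (contDiff_snd.comp hcurve)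
  have hqd : Differentiable ℝ q := hq.differentiable two_ne_zero
  have hvd : Differentiable ℝ v := hv.differentiable two_ne_zero
  have hzd : Differentiable ℝ z := hz.differentiable two_ne_zero
  have hsym : ∀ x : LPt n, ∀ i j, hessianV L x i j = hessianV L x j i :=
    fun x i j => hessianV_symm hL x i j
  constructor
  · rintro h
    have hv' : ∀ t, v t = deriv q t := fun t => ((h t).1).symm
    refine ⟨hv', fun t => ?_⟩
    rw [← hv' t]
    refine ⟨(h t).2.2, fun i => ?_⟩
    have hcd : HasDerivAt (fun s => ((q s, v s, z s) : LPt n))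
        (v t, deriv v t, deriv z t) t := by
      have h1 : HasDerivAt q (v t) t := by
        rw [← (h t).1]; exact (hqd t).hasDerivAt
      exact HasDerivAt.prodMk h1 (HasDerivAt.prodMk ((hvd t).hasDerivAt) ((hzd t).hasDerivAt))
    have key := hasDerivAt_pderivV_comp hL i hcd
    have hfun : (fun s => pderivV L (q s, deriv q s, z s) i)
        = fun s => pderivV L (q s, v s, z s) i := by
      funext s; rw [← hv' s]
    rw [hfun, key.deriv, (h t).2.2]
    set x : LPt n := (q t, v t, z t) with hx
    have hdv : ∀ j, deriv v t j = ∑ k, (hessianV L x)⁻¹ j k *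
        (pderivQ L x k - (∑ j', mixedQV L x j' k * x.2.1 j') - L x * mixedZV L x k +
          pderivZ L x * pderivV L x k) := by
      intro j
      have := congrFun ((h t).2.1) j
      exact this
    have hmk := matrix_key (hessianV L x) (hW x) (hsym x)
      (fun k => pderivQ L x k - (∑ j', mixedQV L x j' k * x.2.1 j') - L x * mixedZV L x k +
        pderivZ L x * pderivV L x k) i
    have hW2 : ∑ j, deriv v t j * hessianV L x j i
        = pderivQ L x i - (∑ j', mixedQV L x j' i * x.2.1 j') - L x * mixedZV L x i +
          pderivZ L x * pderivV L x i := by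
      rw [← hmk]
      exact Finset.sum_congr rfl fun j _ => by rw [hdv j]
    have hx21 : ∀ j, x.2.1 j = v t j := fun j => rfl
    rw [hW2]
    simp only [hx21]
    have hcomm : ∑ j', mixedQV L x j' i * v t j' = ∑ j', v t j' * mixedQV L x j' i :=
      Finset.sum_congr rfl fun j _ => mul_comm _ _
    rw [hcomm]
    ring
  · rintro ⟨hv', hH⟩ t
    have hq' : deriv q t = v t := (hv' t).symm
    have hzL : deriv z t = L (q t, v t, z t) := by
      rw [(hH t).1, hq']
    refine ⟨hq', ?_, hzL⟩
    have hcd : HasDerivAt (fun s => ((q s, v s, z s) : LPt n))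
        (v t, deriv v t, deriv z t) t := by
      have h1 : HasDerivAt q (v t) t := by
        rw [← hq']; exact (hqd t).hasDerivAt
      exact HasDerivAt.prodMk h1 (HasDerivAt.prodMk ((hvd t).hasDerivAt) ((hzd t).hasDerivAt))
    set x : LPt n := (q t, v t, z t) with hx
    have hWd : ∀ i, ∑ j, deriv v t j * hessianV L x j i
        = pderivQ L x i - (∑ j', mixedQV L x j' i * x.2.1 j') - L x * mixedZV L x i +
          pderivZ L x * pderivV L x i := by
      intro i
      have key := hasDerivAt_pderivV_comp hL i hcd
      have hHt := (hH t).2 i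
      have hfun : (fun s => pderivV L (q s, deriv q s, z s) i)
          = fun s => pderivV L (q s, v s, z s) i := by
        funext s; rw [← hv' s]
      rw [hfun, key.deriv, hq'] at hHt
      have hx21 : ∀ j, x.2.1 j = v t j := fun j => rfl
      simp only [hx21]
      rw [hzL] at hHt
      have hcomm : ∑ j', mixedQV L x j' i * v t j' = ∑ j', v t j' * mixedQV L x j' i :=
        Finset.sum_congr rfl fun j _ => mul_comm _ _
      rw [hcomm]
      linarith [hHt]
    funext i
    have := matrix_key2 (hessianV L x) (hW x) (hsym x) (deriv v t) i
    rw [← this]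
    refine Finset.sum_congr rfl fun k _ => ?_
    rw [hWd k]

end
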